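/- arXiv:2408.00810 — 3 statements merged into one kernel-verified Lean document; each statement's English description precedes it below -/
import Mathlib

section
/- Let p be a prime, d a positive natural number, and γ ≥ 0 a real number. If τ_1, …, τ_n is a collection of p-adic γ-equiangular lines in ℚ_p^d, then |n|² ≤ |d| · max{|n|, γ²}, where |n| and |d| denote the p-adic absolute values of the integers n and d. -/
open scoped BigOperators

noncomputable section

variable {p : ℕ} [Fact p.Prime]

/-- The bilinear form `⟨x, y⟩ = ∑ i, x i * y i` on `ℚ_p^d`. -/
def pinner {d : ℕ} (x y : Fin d → ℚ_[p]) : ℚ_[p] := ∑ i, x i * y i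

/-- `⟨·, y⟩` as a linear map. -/
def pinnerL {d : ℕ} (y : Fin d → ℚ_[p]) : (Fin d → ℚ_[p]) →ₗ[ℚ_[p]] ℚ_[p] where
  toFun x := pinner x y
  map_add' x z := by simp [pinner, add_mul, Finset.sum_add_distrib]
  map_smul' c x := by simp [pinner, Finset.mul_sum, mul_assoc]

/-- The frame operator `S_τ x = ∑ j, ⟨x, τ j⟩ • τ j`. -/
def frameOp {d n : ℕ} (τ : Fin n → Fin d → ℚ_[p]) :
    (Fin d → ℚ_[p]) →ₗ[ℚ_[p]] (Fin d → ℚ_[p]) :=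
  ∑ j, (pinnerL (τ j)).smulRight (τ j)

/-- `S_τ` is similar (through an invertible operator) to a diagonal operator with
eigenvalues `λ_1, …, λ_d` satisfying `|∑ λ_j|² ≤ |d| |∑ λ_j²|`. -/
def GoodDiagonalizable {d n : ℕ} (τ : Fin n → Fin d → ℚ_[p]) : Prop :=
  ∃ (P : (Fin d → ℚ_[p]) ≃ₗ[ℚ_[p]] (Fin d → ℚ_[p])) (lam : Fin d → ℚ_[p]),
    frameOp τ = P.toLinearMap ∘ₗ Matrix.toLin' (Matrix.diagonal lam) ∘ₗ P.symm.toLinearMap ∧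
    ‖∑ j, lam j‖ ^ 2 ≤ ‖(d : ℚ_[p])‖ * ‖∑ j, lam j ^ 2‖

/-- p-adic `γ`-equiangular lines. -/
def IsPadicEquiangular {d n : ℕ} (γ : ℝ) (τ : Fin n → Fin d → ℚ_[p]) : Prop :=
  (∀ j, pinner (τ j) (τ j) = 1) ∧
  (∀ j k, j ≠ k → ‖pinner (τ j) (τ k)‖ = γ) ∧
  GoodDiagonalizable τ

/-- p-adic `(γ, a)`-equiangular lines. -/
def IsPadicEquiangularA {d n : ℕ} (γ : ℝ) (a : ℚ_[p]) (τ : Fin n → Fin d → ℚ_[p]) : Prop :=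
  (∀ j, pinner (τ j) (τ j) = a) ∧
  (∀ j k, j ≠ k → ‖pinner (τ j) (τ k)‖ = γ) ∧
  GoodDiagonalizable τ


lemma toMatrix'_frameOp {d n : ℕ} (τ : Fin n → Fin d → ℚ_[p]) :
    LinearMap.toMatrix' (frameOp τ) = Matrix.of fun i j => ∑ k, τ k j * τ k i := by
  ext i j
  simp [LinearMap.toMatrix'_apply, frameOp, LinearMap.sum_apply, pinnerL, pinner,
    Pi.single_apply, Finset.sum_ite_eq]

lemma trace_frameOp {d n : ℕ} (τ : Fin n → Fin d → ℚ_[p]) :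
    LinearMap.trace ℚ_[p] _ (frameOp τ) = ∑ j, pinner (τ j) (τ j) := by
  rw [LinearMap.trace_eq_matrix_trace ℚ_[p] (Pi.basisFun ℚ_[p] (Fin d)),
    LinearMap.toMatrix_eq_toMatrix', toMatrix'_frameOp]
  rw [Matrix.trace]
  simp only [Matrix.diag, Matrix.of_apply]
  rw [Finset.sum_comm]
  simp [pinner]

lemma trace_frameOp_sq {d n : ℕ} (τ : Fin n → Fin d → ℚ_[p]) :
    LinearMap.trace ℚ_[p] _ (frameOp τ ∘ₗ frameOp τ)
      = ∑ k, ∑ l, pinner (τ k) (τ l) * pinner (τ l) (τ k) := by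
  rw [LinearMap.trace_eq_matrix_trace ℚ_[p] (Pi.basisFun ℚ_[p] (Fin d)),
    LinearMap.toMatrix_eq_toMatrix', LinearMap.toMatrix'_comp, toMatrix'_frameOp]
  rw [Matrix.trace]
  simp only [Matrix.diag, Matrix.mul_apply, Matrix.of_apply]
  simp only [Finset.sum_mul_sum]
  have key : ∀ k l : Fin n, pinner (τ k) (τ l) * pinner (τ l) (τ k)
      = ∑ j, ∑ i, τ k j * τ k i * (τ l i * τ l j) := by
    intro k l
    rw [pinner, pinner, Finset.sum_mul_sum]
    exact Finset.sum_congr rfl fun j _ => Finset.sum_congr rfl fun i _ => by ring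
  simp only [key]
  conv_lhs => enter [2, i]; rw [Finset.sum_comm]
  rw [Finset.sum_comm]
  congr 1; funext k
  conv_lhs => enter [2, i]; rw [Finset.sum_comm]
  rw [Finset.sum_comm]
  congr 1; funext l
  rw [Finset.sum_comm]

lemma trace_diag {d : ℕ} (lam : Fin d → ℚ_[p]) :
    LinearMap.trace ℚ_[p] _ (Matrix.toLin' (Matrix.diagonal lam)) = ∑ j, lam j := by
  rw [LinearMap.trace_eq_matrix_trace ℚ_[p] (Pi.basisFun ℚ_[p] (Fin d)),
    LinearMap.toMatrix_eq_toMatrix', LinearMap.toMatrix'_toLin', Matrix.trace_diagonal]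

private theorem main {d n : ℕ} (hd : 0 < d)
    (γ : ℝ) (hγ : 0 ≤ γ) (τ : Fin n → Fin d → ℚ_[p])
    (h1 : ∀ j, pinner (τ j) (τ j) = 1)
    (h2 : ∀ j k, j ≠ k → ‖pinner (τ j) (τ k)‖ = γ)
    (P : (Fin d → ℚ_[p]) ≃ₗ[ℚ_[p]] (Fin d → ℚ_[p])) (lam : Fin d → ℚ_[p])
    (hPD : frameOp τ = P.toLinearMap ∘ₗ Matrix.toLin' (Matrix.diagonal lam) ∘ₗ P.symm.toLinearMap)
    (hlam : ‖∑ j, lam j‖ ^ 2 ≤ ‖(d : ℚ_[p])‖ * ‖∑ j, lam j ^ 2‖) :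
    ‖(n : ℚ_[p])‖ ^ 2 ≤ ‖(d : ℚ_[p])‖ * max ‖(n : ℚ_[p])‖ (γ ^ 2) := by
  have hconj : frameOp τ = P.conj (Matrix.toLin' (Matrix.diagonal lam)) := by
    rw [LinearEquiv.conj_apply, hPD, LinearMap.comp_assoc]
  -- ∑ lam = n
  have t1 : (∑ j, lam j) = (n : ℚ_[p]) := by
    have := trace_frameOp τ
    rw [hconj, LinearMap.trace_conj', trace_diag] at this
    simpa [h1] using this
  -- ∑ lam^2 = ∑∑ pinner^2
  have hsq : frameOp τ ∘ₗ frameOp τ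
      = P.conj (Matrix.toLin' (Matrix.diagonal (fun j => lam j ^ 2))) := by
    rw [hconj]
    have : (Matrix.diagonal fun j => lam j ^ 2)
        = Matrix.diagonal lam * Matrix.diagonal lam := by
      show Matrix.diagonal (lam ^ 2) = _
      exact (Matrix.diagonal_pow lam 2).symm.trans (pow_two _)
    rw [this, Matrix.toLin'_mul, ← LinearEquiv.conj_comp]
  have t2 : (∑ j, lam j ^ 2) = ∑ k, ∑ l, pinner (τ k) (τ l) * pinner (τ l) (τ k) := by
    have := trace_frameOp_sq τ
    rw [hsq, LinearMap.trace_conj', trace_diag] at this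
    exact this.symm ▸ this
  -- rewrite double sum as n + off-diagonal
  have split : (∑ k, ∑ l, pinner (τ k) (τ l) * pinner (τ l) (τ k))
      = (n : ℚ_[p]) + ∑ k, ∑ l ∈ Finset.univ.erase k,
          pinner (τ k) (τ l) * pinner (τ l) (τ k) := by
    have : ∀ k : Fin n, (∑ l, pinner (τ k) (τ l) * pinner (τ l) (τ k))
        = 1 + ∑ l ∈ Finset.univ.erase k, pinner (τ k) (τ l) * pinner (τ l) (τ k) := by
      intro k
      rw [← Finset.add_sum_erase _ _ (Finset.mem_univ k), h1 k, one_mul]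
    simp only [this, Finset.sum_add_distrib, Finset.sum_const, Finset.card_univ,
      Fintype.card_fin, nsmul_eq_mul, mul_one]
  have hnorm2 : ‖∑ j, lam j ^ 2‖ ≤ max ‖(n : ℚ_[p])‖ (γ ^ 2) := by
    rw [t2, split]
    refine (Padic.nonarchimedean _ _).trans (max_le_max le_rfl ?_)
    refine IsUltrametricDist.norm_sum_le_of_forall_le_of_nonneg (by positivity) fun k _ => ?_
    refine IsUltrametricDist.norm_sum_le_of_forall_le_of_nonneg (by positivity) fun l hl => ?_
    have hkl : l ≠ k := Finset.ne_of_mem_erase hl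
    rw [norm_mul, h2 k l (Ne.symm hkl), h2 l k hkl, sq]
  calc ‖(n : ℚ_[p])‖ ^ 2 = ‖∑ j, lam j‖ ^ 2 := by rw [t1]
    _ ≤ ‖(d : ℚ_[p])‖ * ‖∑ j, lam j ^ 2‖ := hlam
    _ ≤ ‖(d : ℚ_[p])‖ * max ‖(n : ℚ_[p])‖ (γ ^ 2) :=
        mul_le_mul_of_nonneg_left hnorm2 (norm_nonneg _)

/-- **p-adic van Lint-Seidel relative bound.** -/
theorem padic_vanLintSeidel_relative_bound {d n : ℕ} (hd : 0 < d)
    (γ : ℝ) (hγ : 0 ≤ γ) (τ : Fin n → Fin d → ℚ_[p])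
    (h : IsPadicEquiangular γ τ) :
    ‖(n : ℚ_[p])‖ ^ 2 ≤ ‖(d : ℚ_[p])‖ * max ‖(n : ℚ_[p])‖ (γ ^ 2) := by
  obtain ⟨h1, h2, P, lam, hPD, hlam⟩ := h
  exact main hd γ hγ τ h1 h2 P lam hPD hlam

end
end

section
/- Let p be a prime, d a positive natural number, γ ≥ 0 a real number, and a ∈ ℚ_p nonzero. If τ_1, …, τ_n is a collection of p-adic (γ, a)-equiangular lines in ℚ_p^d, then |n|² ≤ |d| · max{|n|, γ²/|a|²}, where |n| and |d| denote the p-adic absolute values of the integers n and d. -/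
open scoped BigOperators

noncomputable section

variable {p : ℕ} [Fact p.Prime]

/-! The frame operator `S = Tᵀ T` (with `T` the matrix of rows `τ j`) and the Gram matrix
`G = T Tᵀ` have the same traces of positive powers, so the diagonalization gives
`∑ λ_j = tr G = n a` and `∑ λ_j² = tr G²`. In `tr G² = n a² + ∑_{j ≠ k} G_jk G_kj` every
off-diagonal term has norm `γ²`, so the ultrametric inequality gives
`|∑ λ_j²| ≤ max (|n| |a|², γ²)`, and the hypothesis `|∑ λ_j|² ≤ |d| |∑ λ_j²|` becomes
`|n|² |a|² ≤ |d| max (|n| |a|², γ²)`. -/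

open scoped Matrix

namespace Matrix

variable {m n R : Type*} [Fintype m] [Fintype n] [DecidableEq m] [DecidableEq n]

theorem mul_pow_succ_eq [Semiring R] (A : Matrix m n R) (B : Matrix n m R) (k : ℕ) :
    (A * B) ^ (k + 1) = A * (B * A) ^ k * B := by
  induction k with
  | zero => simp
  | succ k ih => rw [pow_succ, ih, pow_succ]; simp only [Matrix.mul_assoc]

theorem trace_mul_pow_succ_comm [CommSemiring R] (A : Matrix m n R) (B : Matrix n m R) (k : ℕ) :
    ((A * B) ^ (k + 1)).trace = ((B * A) ^ (k + 1)).trace := by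
  rw [mul_pow_succ_eq, trace_mul_cycle, pow_succ']

theorem norm_trace_sq_le {K : Type*} [NormedField K] [IsUltrametricDist K] (G : Matrix n n K)
    (a : K) (γ : ℝ) (hdiag : ∀ j, G j j = a) (hoff : ∀ j k, j ≠ k → ‖G j k‖ ≤ γ) :
    ‖(G ^ 2).trace‖ ≤ max (‖(Fintype.card n : K)‖ * ‖a‖ ^ 2) (γ ^ 2) := by
  have hsplit : (G ^ 2).trace =
      Fintype.card n * a ^ 2 + ∑ j, ∑ k ∈ Finset.univ.erase j, G j k * G k j := by
    simp only [trace, diag, sq, mul_apply]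
    rw [Finset.card_univ.symm, ← nsmul_eq_mul, ← Finset.sum_const, ← Finset.sum_add_distrib]
    refine Finset.sum_congr rfl fun j _ => ?_
    rw [← Finset.add_sum_erase _ _ (Finset.mem_univ j), hdiag j]
  have hoff_sum : ‖∑ j, ∑ k ∈ Finset.univ.erase j, G j k * G k j‖ ≤ γ ^ 2 := by
    refine IsUltrametricDist.norm_sum_le_of_forall_le_of_nonneg (sq_nonneg γ) fun j _ => ?_
    refine IsUltrametricDist.norm_sum_le_of_forall_le_of_nonneg (sq_nonneg γ) fun k hk => ?_
    have hkj : k ≠ j := Finset.ne_of_mem_erase hk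
    rw [norm_mul, sq]
    exact mul_le_mul (hoff j k hkj.symm) (hoff k j hkj) (norm_nonneg _)
      ((norm_nonneg _).trans (hoff j k hkj.symm))
  rw [hsplit]
  refine (IsUltrametricDist.norm_add_le_max _ _).trans (max_le_max ?_ hoff_sum)
  rw [norm_mul, norm_pow]

end Matrix

theorem LinearMap.trace_pow_conj_diagonal {R ι : Type*} [CommRing R] [Fintype ι] [DecidableEq ι]
    (P : (ι → R) ≃ₗ[R] (ι → R)) (lam : ι → R) (k : ℕ) :
    trace R _ ((P.toLinearMap ∘ₗ Matrix.toLin' (Matrix.diagonal lam) ∘ₗ P.symm.toLinearMap) ^ k) =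
      ∑ i, lam i ^ k := by
  rw [← LinearEquiv.conjAlgEquiv_apply (R := R), ← map_pow, LinearEquiv.conjAlgEquiv_apply,
    ← comp_assoc, ← LinearEquiv.conj_apply, trace_conj', ← Matrix.toLin'_pow,
    Matrix.diagonal_pow, Matrix.trace_toLin'_eq, Matrix.trace_diagonal]
  rfl

section Frame

variable {d n : ℕ}

def gram (τ : Fin n → Fin d → ℚ_[p]) : Matrix (Fin n) (Fin n) ℚ_[p] :=
  Matrix.of fun j k => pinner (τ j) (τ k)

theorem gram_eq_mul_transpose (τ : Fin n → Fin d → ℚ_[p]) :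
    gram τ = Matrix.of τ * (Matrix.of τ)ᵀ := by
  ext j k
  simp [gram, pinner, Matrix.mul_apply]

theorem frameOp_eq_toLin' (τ : Fin n → Fin d → ℚ_[p]) :
    frameOp τ = Matrix.toLin' ((Matrix.of τ)ᵀ * Matrix.of τ) := by
  ext x i
  simp [frameOp, pinnerL, pinner, Matrix.mulVec, dotProduct, Pi.single_apply, mul_comm]

theorem trace_frameOp_pow_succ (τ : Fin n → Fin d → ℚ_[p]) (k : ℕ) :
    LinearMap.trace ℚ_[p] _ (frameOp τ ^ (k + 1)) = (gram τ ^ (k + 1)).trace := by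
  rw [frameOp_eq_toLin', ← Matrix.toLin'_pow, Matrix.trace_toLin'_eq,
    Matrix.trace_mul_pow_succ_comm, gram_eq_mul_transpose]

end Frame

theorem padic_vanLintSeidel_relative_bound_a_general {d n : ℕ}
    (γ : ℝ) (a : ℚ_[p]) (ha : a ≠ 0) (τ : Fin n → Fin d → ℚ_[p])
    (h : IsPadicEquiangularA γ a τ) :
    ‖(n : ℚ_[p])‖ ^ 2 ≤ ‖(d : ℚ_[p])‖ * max ‖(n : ℚ_[p])‖ (γ ^ 2 / ‖a‖ ^ 2) := by
  obtain ⟨hdiag, hoff, P, lam, hS, hlam⟩ := h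
  have hpow : ∀ k, ∑ j, lam j ^ (k + 1) = (gram τ ^ (k + 1)).trace := fun k => by
    rw [← LinearMap.trace_pow_conj_diagonal P, ← hS, trace_frameOp_pow_succ]
  have hsum : ∑ j, lam j = n * a := by
    simpa [Matrix.trace, gram, hdiag] using hpow 0
  have hsq : ‖∑ j, lam j ^ 2‖ ≤ max (‖(n : ℚ_[p])‖ * ‖a‖ ^ 2) (γ ^ 2) := by
    simpa [hpow 1] using
      (gram τ).norm_trace_sq_le a γ hdiag fun j k hjk => (hoff j k hjk).le
  have ha2 : 0 < ‖a‖ ^ 2 := pow_pos (norm_pos_iff.mpr ha) 2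
  rw [← mul_le_mul_iff_of_pos_right ha2, mul_assoc, max_mul_of_nonneg _ _ ha2.le,
    div_mul_cancel₀ _ ha2.ne']
  calc ‖(n : ℚ_[p])‖ ^ 2 * ‖a‖ ^ 2 = ‖∑ j, lam j‖ ^ 2 := by rw [hsum, norm_mul, mul_pow]
    _ ≤ ‖(d : ℚ_[p])‖ * ‖∑ j, lam j ^ 2‖ := hlam
    _ ≤ _ := by gcongr

theorem padic_vanLintSeidel_relative_bound_a {d n : ℕ} (hd : 0 < d)
    (γ : ℝ) (hγ : 0 ≤ γ) (a : ℚ_[p]) (ha : a ≠ 0) (τ : Fin n → Fin d → ℚ_[p])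
    (h : IsPadicEquiangularA γ a τ) :
    ‖(n : ℚ_[p])‖ ^ 2 ≤ ‖(d : ℚ_[p])‖ * max ‖(n : ℚ_[p])‖ (γ ^ 2 / ‖a‖ ^ 2) :=
  padic_vanLintSeidel_relative_bound_a_general γ a ha τ h

end
end

section
/- Let p be a prime, d a positive natural number, and γ ≥ 0 a real number. Let τ_1, …, τ_n be vectors in ℚ_p^d such that (i) there exists a nonzero a ∈ ℚ_p with ⟨τ_j, τ_j⟩ = a for all 1 ≤ j ≤ n; (ii) |⟨τ_j, τ_k⟩| = γ for all 1 ≤ j, k ≤ n with j ≠ k; (iii) there exists a nonzero b ∈ ℚ_p such that b·x = ∑_{j=1}^n ⟨x, τ_j⟩ τ_j for all x ∈ ℚ_p^d. Then |n|² ≤ |d| · max{|n|, γ²/|a|²}, where |n| and |d| denote the p-adic absolute values of the integers n and d. -/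
open scoped BigOperators

noncomputable section

variable {p : ℕ} [Fact p.Prime]

theorem padic_vanLintSeidel_of_tight_a {d n : ℕ} (hd : 0 < d)
    (γ : ℝ) (hγ : 0 ≤ γ) (τ : Fin n → Fin d → ℚ_[p])
    (a : ℚ_[p]) (ha : a ≠ 0)
    (h1 : ∀ j, pinner (τ j) (τ j) = a)
    (h2 : ∀ j k, j ≠ k → ‖pinner (τ j) (τ k)‖ = γ)
    (h3 : ∃ b : ℚ_[p], b ≠ 0 ∧ ∀ x : Fin d → ℚ_[p], b • x = ∑ j, pinner x (τ j) • τ j) :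
    ‖(n : ℚ_[p])‖ ^ 2 ≤ ‖(d : ℚ_[p])‖ * max ‖(n : ℚ_[p])‖ (γ ^ 2 / ‖a‖ ^ 2) := by
  obtain ⟨b, hb0, hb⟩ := h3
  have hdQ : (d : ℚ_[p]) ≠ 0 := Nat.cast_ne_zero.mpr hd.ne'
  have psmul : ∀ (c : ℚ_[p]) (x y : Fin d → ℚ_[p]), pinner (c • x) y = c * pinner x y := by
    intro c x y; simp [pinner, Finset.mul_sum, mul_assoc]
  have psum : ∀ (f : Fin n → Fin d → ℚ_[p]) (y : Fin d → ℚ_[p]),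
      pinner (∑ j, f j) y = ∑ j, pinner (f j) y := by
    intro f y
    simp only [pinner, Finset.sum_apply, Finset.sum_mul]
    exact Finset.sum_comm
  -- Step A : b * d = n * a
  have stepA : b * d = n * a := by
    have hcoord : ∀ i : Fin d, b = ∑ j, τ j i * τ j i := by
      intro i
      have := congrFun (hb (Pi.single i 1)) i
      simpa [pinner, Pi.single_apply, Finset.sum_apply, Finset.mul_sum,
        mul_comm] using this
    calc b * d = ∑ _i : Fin d, b := by simp [mul_comm]
    _ = ∑ i : Fin d, ∑ j, τ j i * τ j i := Finset.sum_congr rfl fun i _ => hcoord i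
    _ = ∑ j, pinner (τ j) (τ j) := Finset.sum_comm
    _ = n * a := by simp [h1, mul_comm]
  rcases Nat.eq_zero_or_pos n with hn | hn
  · subst hn
    simp only [Nat.cast_zero, norm_zero]
    have h0 : (0:ℝ) ≤ max (0:ℝ) (γ ^ 2 / ‖a‖ ^ 2) := le_max_left _ _
    nlinarith [norm_nonneg ((d : ℚ_[p]))]
  set k : Fin n := ⟨0, hn⟩
  -- Step B
  have key : b * a = ∑ j, pinner (τ k) (τ j) * pinner (τ j) (τ k) := by
    calc b * a = pinner (b • τ k) (τ k) := by rw [psmul, h1]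
    _ = pinner (∑ j, pinner (τ k) (τ j) • τ j) (τ k) := by rw [hb]
    _ = ∑ j, pinner (τ k) (τ j) * pinner (τ j) (τ k) := by
        rw [psum]; exact Finset.sum_congr rfl fun j _ => psmul _ _ _
  have stepB : b * a - a ^ 2
      = ∑ j ∈ Finset.univ.erase k, pinner (τ k) (τ j) * pinner (τ j) (τ k) := by
    rw [key, ← Finset.add_sum_erase _ _ (Finset.mem_univ k), h1]
    ring
  have hnormB : ‖b * a - a ^ 2‖ ≤ γ ^ 2 := by
    rw [stepB]
    refine IsUltrametricDist.norm_sum_le_of_forall_le_of_nonneg (by positivity) ?_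
    intro j hj
    have hjk : k ≠ j := fun h => (Finset.mem_erase.mp hj).1 h.symm
    rw [norm_mul, h2 k j hjk, h2 j k hjk.symm, sq]
  -- Step C
  have hbval : b = n * a / d := by field_simp at stepA ⊢; linear_combination stepA
  have stepC : b * a - a ^ 2 = a ^ 2 * ((n : ℚ_[p]) - d) / d := by
    rw [hbval]; field_simp
  have haa : (0:ℝ) < ‖a‖ ^ 2 := pow_pos (norm_pos_iff.mpr ha) 2
  have hdd : (0:ℝ) < ‖(d : ℚ_[p])‖ := norm_pos_iff.mpr hdQ
  have hnd : ‖(n : ℚ_[p]) - (d : ℚ_[p])‖ ≤ ‖(d : ℚ_[p])‖ * (γ ^ 2 / ‖a‖ ^ 2) := by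
    rw [stepC, norm_div, norm_mul, norm_pow, div_le_iff₀ hdd] at hnormB
    rw [mul_div_assoc'] at *
    rw [le_div_iff₀ haa]
    nlinarith [hnormB]
  -- Step D
  have hn1 : ‖(n : ℚ_[p])‖ ≤ 1 := by
    simpa using Padic.norm_int_le_one (p := p) (n : ℤ)
  have hmax : ‖(n : ℚ_[p])‖ ≤ max ‖(n : ℚ_[p]) - (d : ℚ_[p])‖ ‖(d : ℚ_[p])‖ := by
    simpa using Padic.nonarchimedean ((n : ℚ_[p]) - (d : ℚ_[p])) (d : ℚ_[p])
  have h2a : ‖(n : ℚ_[p])‖ ^ 2 ≤ ‖(n : ℚ_[p])‖ * max ‖(n : ℚ_[p]) - (d : ℚ_[p])‖ ‖(d : ℚ_[p])‖ := by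
    rw [sq]; exact mul_le_mul_of_nonneg_left hmax (norm_nonneg _)
  refine h2a.trans ?_
  rw [mul_max_of_nonneg _ _ (norm_nonneg ((n : ℚ_[p])))]
  refine max_le ?_ ?_
  · calc ‖(n : ℚ_[p])‖ * ‖(n : ℚ_[p]) - (d : ℚ_[p])‖
        ≤ 1 * (‖(d : ℚ_[p])‖ * (γ ^ 2 / ‖a‖ ^ 2)) :=
          mul_le_mul hn1 hnd (norm_nonneg _) zero_le_one
    _ = ‖(d : ℚ_[p])‖ * (γ ^ 2 / ‖a‖ ^ 2) := one_mul _
    _ ≤ _ := mul_le_mul_of_nonneg_left (le_max_right _ _) (norm_nonneg _)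
  · rw [mul_comm]
    exact mul_le_mul_of_nonneg_left (le_max_left _ _) (norm_nonneg _)

end
end
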